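/- arXiv:1303.3984 — 5 statements merged into one kernel-verified Lean document; each statement's English description precedes it below -/
import Mathlib

section
/- Let A be an n×n real symmetric matrix with nonnegative entries and zero diagonal (the adjacency matrix of a simple undirected graph), let β, δ : {1,…,n} → ℝ with β_i > 0 and δ_i ≥ 0 for all i, and let ε > 0. Suppose the matrix (D − εI)B⁻¹ − A is positive semidefinite, where B = diag(β_1,…,β_n) and D = diag(δ_1,…,δ_n). Let p : ℝ → ℝⁿ be a differentiable function satisfying, for all t ≥ 0 and all i, dp_i/dt = (1 − p_i(t)) β_i ∑_{j=1}^n a_{ij} p_j(t) − δ_i p_i(t), and suppose p_i(t) ∈ [0,1] for all i and all t ≥ 0. Then there exists α > 0 such that ‖p(t)‖ ≤ α ‖p(0)‖ e^{−εt} for all t ≥ 0, where ‖·‖ is the Euclidean norm. -/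
/-!
Lyapunov argument with `V(p) = ∑ pᵢ² / βᵢ`. Along the flow `V' = 2 ∑ pᵢ fᵢ(p) / βᵢ`; since
`pᵢ ∈ [0, 1]` and `(A p)ᵢ ≥ 0`, dropping the factor `1 - pᵢ` only increases this, and positive
semidefiniteness of `(D - εI)B⁻¹ - A` bounds the remaining quadratic form `pᵀAp - pᵀ(D B⁻¹)p`
by `-ε V`. So `V' ≤ -2εV`, Grönwall gives `V(t) ≤ V(0) e^{-2εt}`, and `V` is comparable to
`‖p‖²` because the `βᵢ` are positive.
-/

open Finset Real Matrix

theorem le_mul_exp_of_hasDerivAt_le_mul {f f' : ℝ → ℝ} {K : ℝ}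
    (hf : ∀ t ≥ 0, HasDerivAt f (f' t) t) (bound : ∀ t ≥ 0, f' t ≤ K * f t)
    {t : ℝ} (ht : 0 ≤ t) : f t ≤ f 0 * exp (K * t) := by
  have hcont : ContinuousOn f (Set.Icc 0 t) := fun s hs =>
    (hf s hs.1).continuousAt.continuousWithinAt
  have := le_gronwallBound_of_liminf_deriv_right_le (ε := 0) (δ := f 0) hcont
    (fun s hs _ hr => (hf s hs.1).hasDerivWithinAt.liminf_right_slope_le hr) le_rfl
    (fun s hs => by simpa using bound s hs.1) t ⟨ht, le_rfl⟩
  simpa [gronwallBound_ε0] using this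

section

variable {ι : Type*} [Fintype ι]

theorem exists_pos_forall_le_and_inv_le {w : ι → ℝ} (hw : ∀ i, 0 < w i) :
    ∃ C > 0, ∀ i, w i ≤ C ∧ (w i)⁻¹ ≤ C := by
  have hnonneg : ∀ i ∈ univ, 0 ≤ w i + (w i)⁻¹ := fun i _ => by have := hw i; positivity
  refine ⟨1 + ∑ i, (w i + (w i)⁻¹), by linarith [sum_nonneg hnonneg], fun i => ?_⟩
  have hi := single_le_sum hnonneg (mem_univ i)
  have := hw i
  constructor <;> nlinarith [inv_pos.2 this]

theorem sq_norm_le_mul_sum_sq_div {w : ι → ℝ} {C : ℝ} (hw : ∀ i, 0 < w i) (hC : ∀ i, w i ≤ C)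
    (x : EuclideanSpace ℝ ι) : ‖x‖ ^ 2 ≤ C * ∑ i, x i ^ 2 / w i := by
  rw [EuclideanSpace.real_norm_sq_eq, mul_sum]
  refine sum_le_sum fun i _ => ?_
  rw [mul_div_assoc', le_div_iff₀ (hw i), mul_comm C]
  exact mul_le_mul_of_nonneg_left (hC i) (sq_nonneg _)

theorem sum_sq_div_le_mul_sq_norm {w : ι → ℝ} {C : ℝ} (hC : ∀ i, (w i)⁻¹ ≤ C)
    (x : EuclideanSpace ℝ ι) : ∑ i, x i ^ 2 / w i ≤ C * ‖x‖ ^ 2 := by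
  rw [EuclideanSpace.real_norm_sq_eq, mul_sum]
  refine sum_le_sum fun i _ => ?_
  rw [div_eq_mul_inv, mul_comm C]
  exact mul_le_mul_of_nonneg_left (hC i) (sq_nonneg _)

theorem Matrix.dotProduct_mulVec_le_of_posSemidef_diagonal_sub [DecidableEq ι]
    {A : Matrix ι ι ℝ} {d : ι → ℝ} (h : (diagonal d - A).PosSemidef) (x : ι → ℝ) :
    x ⬝ᵥ A *ᵥ x ≤ ∑ i, d i * x i ^ 2 := by
  have h' := h.dotProduct_mulVec_nonneg x
  rw [star_trivial, sub_mulVec, dotProduct_sub, sub_nonneg] at h'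
  refine h'.trans_eq ?_
  simp only [dotProduct, mulVec_diagonal]
  exact sum_congr rfl fun i _ => by ring

def sisVectorField (A : Matrix ι ι ℝ) (β δ : ι → ℝ) (x : ι → ℝ) (i : ι) : ℝ :=
  (1 - x i) * β i * (A *ᵥ x) i - δ i * x i

theorem sum_mul_sisVectorField_div_le [DecidableEq ι] {A : Matrix ι ι ℝ} {β δ : ι → ℝ} {ε : ℝ}
    (hA : ∀ i j, 0 ≤ A i j) (hβ : ∀ i, 0 < β i)
    (hPSD : (diagonal (fun i => (δ i - ε) / β i) - A).PosSemidef)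
    {x : ι → ℝ} (hx : ∀ i, x i ∈ Set.Icc 0 1) :
    ∑ i, x i * sisVectorField A β δ x i / β i ≤ -ε * ∑ i, x i ^ 2 / β i := by
  have hterm : ∀ i ∈ univ, x i * sisVectorField A β δ x i / β i ≤
      x i * (A *ᵥ x) i - (δ i - ε) / β i * x i ^ 2 - ε * (x i ^ 2 / β i) := by
    intro i _
    have hAx : 0 ≤ (A *ᵥ x) i := sum_nonneg fun j _ => mul_nonneg (hA i j) (hx j).1
    have hinf : x i * (1 - x i) * (A *ᵥ x) i ≤ x i * (A *ᵥ x) i := by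
      nlinarith [mul_nonneg (hx i).1 hAx, (hx i).1, (hx i).2]
    have hβi := (hβ i).ne'
    calc x i * sisVectorField A β δ x i / β i
        = x i * (1 - x i) * (A *ᵥ x) i - δ i * x i ^ 2 / β i := by
          unfold sisVectorField; field_simp
      _ ≤ x i * (A *ᵥ x) i - δ i * x i ^ 2 / β i := by linarith
      _ = _ := by field_simp; ring
  have hquad := dotProduct_mulVec_le_of_posSemidef_diagonal_sub hPSD x
  calc ∑ i, x i * sisVectorField A β δ x i / β i
      ≤ ∑ i, (x i * (A *ᵥ x) i - (δ i - ε) / β i * x i ^ 2 - ε * (x i ^ 2 / β i)) :=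
        sum_le_sum hterm
    _ = x ⬝ᵥ A *ᵥ x - ∑ i, (δ i - ε) / β i * x i ^ 2 - ε * ∑ i, x i ^ 2 / β i := by
        simp only [sum_sub_distrib, mul_sum, dotProduct]
    _ ≤ -ε * ∑ i, x i ^ 2 / β i := by linarith

theorem hasDerivAt_sum_sq_div {x : ι → ℝ → ℝ} {x' : ι → ℝ} {w : ι → ℝ} {t : ℝ}
    (hx : ∀ i, HasDerivAt (x i) (x' i) t) :
    HasDerivAt (fun s => ∑ i, x i s ^ 2 / w i) (2 * ∑ i, x i t * x' i / w i) t := by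
  rw [mul_sum]
  refine HasDerivAt.fun_sum fun i _ => ?_
  exact (((hx i).pow 2).div_const (w i)).congr_deriv (by push_cast; ring)

end

theorem sis_heterogeneous_exponential_stability_general
    {n : ℕ} (A : Matrix (Fin n) (Fin n) ℝ)
    (hAnonneg : ∀ i j, 0 ≤ A i j)
    (β δ : Fin n → ℝ) (hβ : ∀ i, 0 < β i)
    (ε : ℝ)
    (hPSD : (Matrix.diagonal (fun i => (δ i - ε) / β i) - A).PosSemidef)
    (p : ℝ → EuclideanSpace ℝ (Fin n))
    (hode : ∀ t ≥ (0 : ℝ), ∀ i, HasDerivAt (fun s => p s i)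
      ((1 - p t i) * β i * (∑ j, A i j * p t j) - δ i * p t i) t)
    (hrange : ∀ t ≥ (0 : ℝ), ∀ i, p t i ∈ Set.Icc (0 : ℝ) 1) :
    ∃ α > (0 : ℝ), ∀ t ≥ (0 : ℝ), ‖p t‖ ≤ α * ‖p 0‖ * Real.exp (-ε * t) := by
  set V : ℝ → ℝ := fun t => ∑ i, p t i ^ 2 / β i
  have hV : ∀ t ≥ 0, HasDerivAt V (2 * ∑ i, p t i * sisVectorField A β δ (p t) i / β i) t :=
    fun t ht => hasDerivAt_sum_sq_div (hode t ht)
  have hdecay : ∀ t ≥ 0, V t ≤ V 0 * exp (-(2 * ε) * t) := fun t ht =>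
    le_mul_exp_of_hasDerivAt_le_mul hV (fun s hs => by
      linarith [sum_mul_sisVectorField_div_le hAnonneg hβ hPSD (hrange s hs)]) ht
  obtain ⟨C, hC, hCβ⟩ := exists_pos_forall_le_and_inv_le hβ
  refine ⟨C, hC, fun t ht => le_of_sq_le_sq ?_ (by positivity)⟩
  calc ‖p t‖ ^ 2 ≤ C * V t := sq_norm_le_mul_sum_sq_div hβ (fun i => (hCβ i).1) (p t)
    _ ≤ C * (C * ‖p 0‖ ^ 2 * exp (-(2 * ε) * t)) := by
        gcongr
        exact (hdecay t ht).trans (mul_le_mul_of_nonneg_right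
          (sum_sq_div_le_mul_sq_norm (fun i => (hCβ i).2) (p 0)) (exp_nonneg _))
    _ = (C * ‖p 0‖ * exp (-ε * t)) ^ 2 := by
        rw [mul_pow, mul_pow, ← exp_nat_mul]; ring_nf

/-- **Exponential stability of the heterogeneous N-intertwined SIS model.**
If `A` is the adjacency matrix of a simple undirected graph (symmetric, nonnegative,
zero diagonal), the infection rates `β i` are positive, the curing rates `δ i` are
nonnegative, `ε > 0`, and the matrix `(D - εI)B⁻¹ - A` is positive semidefinite
(equivalently `λ₁(BA - D) ≤ -ε`), then any solution `p` of the SIS dynamics with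
values in `[0,1]ⁿ` converges to zero exponentially fast with rate `ε`. -/
theorem sis_heterogeneous_exponential_stability
    {n : ℕ} (A : Matrix (Fin n) (Fin n) ℝ)
    (hA : A.IsSymm) (hAnonneg : ∀ i j, 0 ≤ A i j) (hAdiag : ∀ i, A i i = 0)
    (β δ : Fin n → ℝ) (hβ : ∀ i, 0 < β i) (hδ : ∀ i, 0 ≤ δ i)
    (ε : ℝ) (hε : 0 < ε)
    (hPSD : (Matrix.diagonal (fun i => (δ i - ε) / β i) - A).PosSemidef)
    (p : ℝ → EuclideanSpace ℝ (Fin n))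
    (hode : ∀ t ≥ (0 : ℝ), ∀ i, HasDerivAt (fun s => p s i)
      ((1 - p t i) * β i * (∑ j, A i j * p t j) - δ i * p t i) t)
    (hrange : ∀ t ≥ (0 : ℝ), ∀ i, p t i ∈ Set.Icc (0 : ℝ) 1) :
    ∃ α > (0 : ℝ), ∀ t ≥ (0 : ℝ), ‖p t‖ ≤ α * ‖p 0‖ * Real.exp (-ε * t) :=
  sis_heterogeneous_exponential_stability_general A hAnonneg β δ hβ ε hPSD p hode hrange
end

section
/- Let A = [a_{ij}] be an n×n real matrix with a_{ij} ≥ 0 for all i, j, and let β_i ≥ 0, δ_i ≥ 0 for i = 1,…,n. Let p : ℝ → ℝⁿ be differentiable with dp_i/dt = (1 − p_i(t)) β_i ∑_j a_{ij} p_j(t) − δ_i p_i(t) and p_i(t) ∈ [0,1] for all i and all t ≥ 0, and let p̂ : ℝ → ℝⁿ be differentiable with dp̂_i/dt = β_i ∑_j a_{ij} p̂_j(t) − δ_i p̂_i(t) for all t ≥ 0. If p̂(0) = p(0), then p̂_i(t) ≥ p_i(t) for all i and all t ≥ 0. -/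
open Filter Set Real

/-- If `f` has derivative `D` at `a > 0`, vanishes at `a`, and is nonnegative on
`[0, a)`, then `D ≤ 0` (left-derivative test). -/
lemma sis_aux_left_deriv {f : ℝ → ℝ} {a D : ℝ} (ha : 0 < a) (hf : HasDerivAt f D a)
    (h0 : f a = 0) (hpos : ∀ s ∈ Set.Ico (0:ℝ) a, 0 ≤ f s) : D ≤ 0 := by
  have hs := hasDerivAt_iff_tendsto_slope.mp hf
  have h1 : Tendsto (slope f a) (nhdsWithin a (Set.Iio a)) (nhds D) :=
    hs.mono_left (nhdsWithin_mono a (fun x hx => by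
      simp only [Set.mem_compl_iff, Set.mem_singleton_iff]
      exact ne_of_lt hx))
  refine le_of_tendsto h1 ?_
  filter_upwards [Ioo_mem_nhdsLT_of_mem (⟨ha, le_refl a⟩ : a ∈ Set.Ioc 0 a)] with s hsm
  rw [slope_def_field, h0, sub_zero]
  exact div_nonpos_of_nonneg_of_nonpos (hpos s ⟨le_of_lt hsm.1, hsm.2⟩)
    (by linarith [hsm.2])

/-- **The linearized SIS dynamics upper-bounds the nonlinear SIS dynamics.**
If `p` solves the nonlinear heterogeneous SIS model with values in `[0,1]`,
`p̂` solves the linearization `dp̂/dt = (BA - D)p̂`, and both share the same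
initial condition, then `p̂ i t ≥ p i t` for all `i` and all `t ≥ 0`. -/
theorem sis_linear_upper_bounds_nonlinear
    {n : ℕ} (A : Matrix (Fin n) (Fin n) ℝ) (hAnonneg : ∀ i j, 0 ≤ A i j)
    (β δ : Fin n → ℝ) (hβ : ∀ i, 0 ≤ β i) (hδ : ∀ i, 0 ≤ δ i)
    (p phat : ℝ → Fin n → ℝ)
    (hp : ∀ t ≥ (0 : ℝ), ∀ i, HasDerivAt (fun s => p s i)
      ((1 - p t i) * β i * (∑ j, A i j * p t j) - δ i * p t i) t)
    (hrange : ∀ t ≥ (0 : ℝ), ∀ i, p t i ∈ Set.Icc (0 : ℝ) 1)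
    (hphat : ∀ t ≥ (0 : ℝ), ∀ i, HasDerivAt (fun s => phat s i)
      (β i * (∑ j, A i j * phat t j) - δ i * phat t i) t)
    (h0 : phat 0 = p 0) :
    ∀ t ≥ (0 : ℝ), ∀ i, p t i ≤ phat t i := by
  set C : ℝ := 1 + ∑ k, β k * ∑ j, A k j with hC
  -- key claim with ε-margin
  have key : ∀ ε > (0:ℝ), ∀ s ≥ (0:ℝ), ∀ j,
      0 < phat s j - p s j + ε * Real.exp (C * s) := by
    intro ε hε
    set g : ℝ → Fin n → ℝ := fun s j => phat s j - p s j + ε * Real.exp (C * s) with hgdef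
    -- derivative of g
    have hg : ∀ s ≥ (0:ℝ), ∀ j, HasDerivAt (fun u => g u j)
        ((β j * (∑ k, A j k * phat s k) - δ j * phat s j)
          - ((1 - p s j) * β j * (∑ k, A j k * p s k) - δ j * p s j)
          + ε * (Real.exp (C * s) * C)) s := by
      intro s hs j
      have hexp : HasDerivAt (fun u : ℝ => Real.exp (C * u))
          (Real.exp (C * s) * C) s := by
        simpa using ((hasDerivAt_id s).const_mul C).exp
      exact ((hphat s hs j).sub (hp s hs j)).add (hexp.const_mul ε)
    by_contra hcon
    push_neg at hcon
    obtain ⟨s₀, hs₀, j₀, hj₀⟩ := hcon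
    -- the "bad" set
    set S : Set ℝ := ⋃ j, {s : ℝ | 0 ≤ s ∧ g s j ≤ 0} with hSdef
    have hSne : S.Nonempty := ⟨s₀, Set.mem_iUnion.mpr ⟨j₀, hs₀, hj₀⟩⟩
    have hSbdd : BddBelow S := ⟨0, fun s hs => by
      obtain ⟨j, hj⟩ := Set.mem_iUnion.mp hs; exact hj.1⟩
    have hSclosed : IsClosed S := by
      refine isClosed_iUnion_of_finite fun j => isClosed_of_closure_subset fun s hs => ?_
      have hsub : {s : ℝ | 0 ≤ s ∧ g s j ≤ 0} ⊆ Set.Ici 0 := fun u hu => hu.1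
      have hs0 : (0:ℝ) ≤ s := by
        have := closure_mono hsub hs
        rwa [isClosed_Ici.closure_eq] at this
      have hcont : ContinuousAt (fun u => g u j) s := (hg s hs0 j).continuousAt
      have hne : (nhdsWithin s {u : ℝ | 0 ≤ u ∧ g u j ≤ 0}).NeBot :=
        mem_closure_iff_nhdsWithin_neBot.mp hs
      refine ⟨hs0, ?_⟩
      have htd : Tendsto (fun u => g u j)
          (nhdsWithin s {u : ℝ | 0 ≤ u ∧ g u j ≤ 0}) (nhds (g s j)) :=
        hcont.continuousWithinAt.tendsto
      refine le_of_tendsto htd ?_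
      filter_upwards [self_mem_nhdsWithin] with u hu
      exact hu.2
    set T : ℝ := sInf S with hT
    have hTmem : T ∈ S := hSclosed.csInf_mem hSne hSbdd
    obtain ⟨i₀, hTpos0, hTi₀⟩ := Set.mem_iUnion.mp hTmem
    -- g 0 j = ε > 0, so T > 0
    have hg0 : ∀ j, g 0 j = ε := by
      intro j
      simp [hgdef, congrFun h0 j]
    have hTpos : 0 < T := by
      rcases lt_or_eq_of_le hTpos0 with h | h
      · exact h
      · exfalso; rw [← h] at hTi₀; rw [hg0 i₀] at hTi₀; linarith
    -- g is positive strictly before T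
    have hbefore : ∀ s ∈ Set.Ico (0:ℝ) T, ∀ j, 0 < g s j := by
      intro s hsm j
      by_contra hcontra
      push_neg at hcontra
      have : s ∈ S := Set.mem_iUnion.mpr ⟨j, hsm.1, hcontra⟩
      exact absurd (csInf_le hSbdd this) (not_le.mpr hsm.2)
    -- g T j ≥ 0 for all j (by continuity from the left)
    have hTnonneg : ∀ j, 0 ≤ g T j := by
      intro j
      have hcont : ContinuousAt (fun u => g u j) T := (hg T (le_of_lt hTpos) j).continuousAt
      have htend : Tendsto (fun u => g u j) (nhdsWithin T (Set.Iio T)) (nhds (g T j)) :=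
        hcont.continuousWithinAt.tendsto
      refine ge_of_tendsto htend ?_
      filter_upwards [Ioo_mem_nhdsLT_of_mem (⟨hTpos, le_refl T⟩ : T ∈ Set.Ioc 0 T)] with u hu
      exact le_of_lt (hbefore u ⟨le_of_lt hu.1, hu.2⟩ j)
    have hTi₀eq : g T i₀ = 0 := le_antisymm hTi₀ (hTnonneg i₀)
    -- apply the left-derivative test
    have hD : (β i₀ * (∑ k, A i₀ k * phat T k) - δ i₀ * phat T i₀)
          - ((1 - p T i₀) * β i₀ * (∑ k, A i₀ k * p T k) - δ i₀ * p T i₀)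
          + ε * (Real.exp (C * T) * C) ≤ 0 := by
      refine sis_aux_left_deriv hTpos (hg T (le_of_lt hTpos) i₀) hTi₀eq ?_
      intro s hsm
      exact le_of_lt (hbefore s hsm i₀)
    -- derive a contradiction: the derivative is in fact positive
    set E : ℝ := ε * Real.exp (C * T) with hE
    have hEpos : 0 < E := mul_pos hε (Real.exp_pos _)
    set x : Fin n → ℝ := phat T with hx
    set y : Fin n → ℝ := p T with hy
    have hxy : ∀ k, y k - E ≤ x k := by
      intro k
      have := hTnonneg k
      simp only [hgdef] at this
      simp only [hx, hy, hE]
      linarith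
    have hxyi : x i₀ - y i₀ = -E := by
      have := hTi₀eq
      simp only [hgdef] at this
      simp only [hx, hy, hE]
      linarith
    have hy01 : ∀ k, 0 ≤ y k ∧ y k ≤ 1 := fun k => hrange T (le_of_lt hTpos) k
    set SA : ℝ := ∑ k, A i₀ k with hSA
    set Sy : ℝ := ∑ k, A i₀ k * y k with hSy
    set Sx : ℝ := ∑ k, A i₀ k * x k with hSx
    have hSylb : Sy - E * SA ≤ Sx := by
      have h1 : ∀ k ∈ Finset.univ, A i₀ k * y k - E * A i₀ k ≤ A i₀ k * x k := by
        intro k _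
        have : A i₀ k * (y k - E) ≤ A i₀ k * x k :=
          mul_le_mul_of_nonneg_left (hxy k) (hAnonneg i₀ k)
        nlinarith [this]
      calc Sy - E * SA = ∑ k, (A i₀ k * y k - E * A i₀ k) := by
            rw [Finset.sum_sub_distrib, ← Finset.mul_sum]
        _ ≤ Sx := Finset.sum_le_sum h1
    have hSynn : 0 ≤ Sy :=
      Finset.sum_nonneg fun k _ => mul_nonneg (hAnonneg i₀ k) (hy01 k).1
    have hSAnn : 0 ≤ SA := Finset.sum_nonneg fun k _ => hAnonneg i₀ k
    have hCge : β i₀ * SA + 1 ≤ C := by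
      have h1 : β i₀ * SA ≤ ∑ k, β k * ∑ j, A k j := by
        refine Finset.single_le_sum (f := fun k => β k * ∑ j, A k j) ?_ (Finset.mem_univ i₀)
        intro k _
        exact mul_nonneg (hβ k) (Finset.sum_nonneg fun j _ => hAnonneg k j)
      rw [hC]; linarith
    -- now derive 0 < D, contradicting hD
    have hβnn := hβ i₀
    have hδnn := hδ i₀
    have hb : β i₀ * (Sy - E * SA) ≤ β i₀ * Sx := mul_le_mul_of_nonneg_left hSylb hβnn
    have h2 : 0 ≤ y i₀ * (β i₀ * Sy) :=
      mul_nonneg (hy01 i₀).1 (mul_nonneg hβnn hSynn)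
    have h3 : δ i₀ * (y i₀ - x i₀) = δ i₀ * E := by
      rw [show y i₀ - x i₀ = E by linarith [hxyi]]
    have h4 : E * (β i₀ * SA + 1) ≤ E * C := mul_le_mul_of_nonneg_left hCge (le_of_lt hEpos)
    have hDrw : (β i₀ * Sx - δ i₀ * x i₀)
          - ((1 - y i₀) * β i₀ * Sy - δ i₀ * y i₀) + E * C ≤ 0 := by
      have : ε * (Real.exp (C * T) * C) = E * C := by rw [hE]; ring
      simp only [hSx, hSy, hx, hy] at hD ⊢
      linarith [hD, this.symm.le, this.le]
    have hδE : 0 ≤ δ i₀ * E := mul_nonneg hδnn (le_of_lt hEpos)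
    nlinarith [hDrw, hb, h2, h3, h4, hδE, hEpos]
  -- conclude by letting ε → 0
  intro t ht i
  by_contra hcl
  push_neg at hcl
  set d : ℝ := p t i - phat t i with hd
  have hdpos : 0 < d := by simp only [hd]; linarith
  have hεpos : 0 < d / Real.exp (C * t) := div_pos hdpos (Real.exp_pos _)
  have := key (d / Real.exp (C * t)) hεpos t ht i
  rw [div_mul_cancel₀ _ (ne_of_gt (Real.exp_pos (C * t)))] at this
  simp only [hd] at this
  linarith
end

section
/- Let A be an n×n real symmetric matrix, B = diag(β_1,…,β_n) with β_i > 0, D = diag(δ_1,…,δ_n) with δ_i ∈ ℝ, and ε ∈ ℝ. Then every eigenvalue μ of BA − D satisfies μ ≤ −ε if and only if the symmetric matrix (D − εI)B⁻¹ − A is positive semidefinite. -/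
open Matrix

/-- Congruence by an invertible matrix preserves positive semidefiniteness (iff form). -/
lemma aux_psd_conj_iff {m : Type*} [Fintype m] [DecidableEq m]
    {P Q M : Matrix m m ℝ} (hQP : Q * P = 1) :
    (P * M * Pᴴ).PosSemidef ↔ M.PosSemidef := by
  constructor
  · intro h
    have h1 : Pᴴ * Qᴴ = (1 : Matrix m m ℝ) := by
      rw [← conjTranspose_mul, hQP, conjTranspose_one]
    have e : Q * (P * M * Pᴴ) * Qᴴ = M := by
      calc Q * (P * M * Pᴴ) * Qᴴ = (Q * P) * (M * (Pᴴ * Qᴴ)) := by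
            simp only [mul_assoc]
        _ = M := by rw [hQP, h1, mul_one, one_mul]
    rw [← e]
    exact h.mul_mul_conjTranspose_same Q
  · intro h
    exact h.mul_mul_conjTranspose_same P

/-- For a real symmetric matrix, `c • 1 - S` is PSD iff all eigenvalues are `≤ c`. -/
lemma aux_shift_psd_iff {m : Type*} [Fintype m] [DecidableEq m]
    {S : Matrix m m ℝ} (hS : S.IsHermitian) (c : ℝ) :
    (c • (1 : Matrix m m ℝ) - S).PosSemidef ↔ ∀ i, hS.eigenvalues i ≤ c := by
  set U : Matrix m m ℝ := (hS.eigenvectorUnitary : Matrix m m ℝ) with hU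
  have hU2 : star U * U = 1 := (Unitary.mem_iff.mp hS.eigenvectorUnitary.2).1
  have hU1 : U * star U = 1 := (Unitary.mem_iff.mp hS.eigenvectorUnitary.2).2
  have hspec : S = U * diagonal hS.eigenvalues * star U := by
    have h := hS.spectral_theorem
    simpa [RCLike.ofReal_real_eq_id] using h
  have key : c • (1 : Matrix m m ℝ) - S
      = U * diagonal (fun i => c - hS.eigenvalues i) * star U := by
    have hd : diagonal (fun i => c - hS.eigenvalues i)
        = c • (1 : Matrix m m ℝ) - diagonal hS.eigenvalues := by
      rw [smul_one_eq_diagonal, ← diagonal_sub]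
    rw [hd, mul_sub, sub_mul, ← hspec]
    congr 1
    rw [mul_smul_comm, smul_mul_assoc, mul_one, hU1]
  have hP : star U = Uᴴ := rfl
  rw [key, hP, aux_psd_conj_iff (Q := star U) hU2, posSemidef_diagonal_iff]
  exact forall_congr' fun i => by rw [sub_nonneg]

/-- Complex spectrum of the complexification of a real symmetric matrix. -/
lemma aux_spectrum_map {m : Type*} [Fintype m] [DecidableEq m]
    {S : Matrix m m ℝ} (hS : S.IsHermitian) :
    spectrum ℂ (S.map Complex.ofReal)
      = Set.range (fun i => (hS.eigenvalues i : ℂ)) := by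
  set U : Matrix m m ℝ := (hS.eigenvectorUnitary : Matrix m m ℝ) with hU
  have hU2 : star U * U = 1 := (Unitary.mem_iff.mp hS.eigenvectorUnitary.2).1
  have hU1 : U * star U = 1 := (Unitary.mem_iff.mp hS.eigenvectorUnitary.2).2
  have hspec : S = U * diagonal hS.eigenvalues * star U := by
    have h := hS.spectral_theorem
    simpa [RCLike.ofReal_real_eq_id] using h
  have hmap : ∀ X Y : Matrix m m ℝ,
      (X * Y).map Complex.ofReal = X.map Complex.ofReal * Y.map Complex.ofReal := by
    intro X Y
    exact Matrix.map_mul (f := Complex.ofRealHom)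
  have hUV : U.map Complex.ofReal * (star U).map Complex.ofReal = 1 := by
    rw [← hmap, hU1]
    simp
  have hVU : (star U).map Complex.ofReal * U.map Complex.ofReal = 1 := by
    rw [← hmap, hU2]
    simp
  set u : (Matrix m m ℂ)ˣ :=
    ⟨U.map Complex.ofReal, (star U).map Complex.ofReal, hUV, hVU⟩ with hu
  have hSc : S.map Complex.ofReal
      = (u : Matrix m m ℂ) * diagonal (fun i => (hS.eigenvalues i : ℂ))
        * ((u⁻¹ : (Matrix m m ℂ)ˣ) : Matrix m m ℂ) := by
    conv_lhs => rw [hspec]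
    rw [hmap, hmap, Matrix.diagonal_map (by simp)]
    rfl
  rw [hSc, spectrum.units_conjugate, spectrum_diagonal]

/-- **Spectral stability condition as a semidefinite constraint.**
For `A` real symmetric, `B = diag(β)` with positive entries, `D = diag(δ)`, and
`ε ∈ ℝ`: every eigenvalue `μ` of `BA - D` satisfies `μ ≤ -ε` (the eigenvalues are
real, so this reads `Re μ ≤ -ε` for every complex eigenvalue) if and only if the
symmetric matrix `(D - εI)B⁻¹ - A` is positive semidefinite. -/
theorem eigenvalues_le_neg_eps_iff_posSemidef
    {n : ℕ} (A : Matrix (Fin n) (Fin n) ℝ) (hA : A.IsSymm)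
    (β δ : Fin n → ℝ) (hβ : ∀ i, 0 < β i) (ε : ℝ) :
    (∀ μ ∈ spectrum ℂ
        ((Matrix.diagonal β * A - Matrix.diagonal δ).map (Complex.ofReal)),
        μ.re ≤ -ε)
      ↔ (Matrix.diagonal (fun i => (δ i - ε) / β i) - A).PosSemidef := by
  classical
  set s : Fin n → ℝ := fun i => Real.sqrt (β i) with hs
  have hs0 : ∀ i, s i ≠ 0 := fun i => (Real.sqrt_pos.2 (hβ i)).ne'
  have hss : ∀ i, s i * s i = β i := fun i => Real.mul_self_sqrt (hβ i).le
  have hβ0 : ∀ i, β i ≠ 0 := fun i => (hβ i).ne'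
  set P : Matrix (Fin n) (Fin n) ℝ := diagonal s with hP
  set Q : Matrix (Fin n) (Fin n) ℝ := diagonal (fun i => (s i)⁻¹) with hQ
  have hPQ : P * Q = 1 := by
    have e : (fun i => s i * (s i)⁻¹) = fun _ => (1 : ℝ) :=
      funext fun i => mul_inv_cancel₀ (hs0 i)
    rw [hP, hQ, diagonal_mul_diagonal, e, diagonal_one]
  have hQP : Q * P = 1 := by
    have e : (fun i => (s i)⁻¹ * s i) = fun _ => (1 : ℝ) :=
      funext fun i => inv_mul_cancel₀ (hs0 i)
    rw [hP, hQ, diagonal_mul_diagonal, e, diagonal_one]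
  set S : Matrix (Fin n) (Fin n) ℝ := P * A * P - diagonal δ with hSdef
  have hPh : Pᴴ = P := by simp [hP]
  have hAh : Aᴴ = A := by
    ext i j
    rw [conjTranspose_apply, star_trivial]
    exact hA.apply i j
  have hS : S.IsHermitian := by
    have hPAP : (P * A * P)ᴴ = P * A * P := by
      rw [conjTranspose_mul, conjTranspose_mul, hPh, hAh, mul_assoc]
    unfold Matrix.IsHermitian
    rw [hSdef, conjTranspose_sub, hPAP, diagonal_conjTranspose]
    simp
  -- decomposition of B*A - D
  have hM : diagonal β * A - diagonal δ = P * S * Q := by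
    rw [hSdef, mul_sub, sub_mul]
    have h1 : P * (P * A * P) * Q = P * P * A * (P * Q) := by
      simp only [mul_assoc]
    have hPP : P * P = diagonal β := by
      rw [hP, diagonal_mul_diagonal]
      exact congrArg _ (funext hss)
    have hPDQ : P * diagonal δ * Q = diagonal δ := by
      rw [hP, hQ, diagonal_mul_diagonal, diagonal_mul_diagonal]
      refine congrArg _ (funext fun i => ?_)
      exact mul_div_cancel_left₀ _ (hs0 i)
    rw [h1, hPQ, mul_one, hPP, hPDQ]
  -- complexify and compute spectrum
  have hmap : ∀ X Y : Matrix (Fin n) (Fin n) ℝ,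
      (X * Y).map Complex.ofReal = X.map Complex.ofReal * Y.map Complex.ofReal := by
    intro X Y
    exact Matrix.map_mul (f := Complex.ofRealHom)
  have hPQc : P.map Complex.ofReal * Q.map Complex.ofReal = 1 := by
    rw [← hmap, hPQ]; simp
  have hQPc : Q.map Complex.ofReal * P.map Complex.ofReal = 1 := by
    rw [← hmap, hQP]; simp
  set u : (Matrix (Fin n) (Fin n) ℂ)ˣ :=
    ⟨P.map Complex.ofReal, Q.map Complex.ofReal, hPQc, hQPc⟩ with hu
  have hMc : (diagonal β * A - diagonal δ).map Complex.ofReal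
      = (u : Matrix (Fin n) (Fin n) ℂ) * (S.map Complex.ofReal)
        * ((u⁻¹ : (Matrix (Fin n) (Fin n) ℂ)ˣ) : Matrix (Fin n) (Fin n) ℂ) := by
    rw [hM, hmap, hmap]
    rfl
  have hspec : spectrum ℂ ((diagonal β * A - diagonal δ).map Complex.ofReal)
      = Set.range (fun i => (hS.eigenvalues i : ℂ)) := by
    rw [hMc, spectrum.units_conjugate, aux_spectrum_map hS]
  -- the left side is equivalent to the eigenvalue bound
  have hL : (∀ μ ∈ spectrum ℂ
        ((Matrix.diagonal β * A - Matrix.diagonal δ).map (Complex.ofReal)),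
        μ.re ≤ -ε) ↔ ∀ i, hS.eigenvalues i ≤ -ε := by
    rw [hspec]
    constructor
    · intro h i
      have := h (hS.eigenvalues i) ⟨i, rfl⟩
      simpa using this
    · rintro h μ ⟨i, rfl⟩
      simpa using h i
  -- the right side is equivalent to the same bound
  have hconj : P * (diagonal (fun i => (δ i - ε) / β i) - A) * Pᴴ
      = (-ε) • (1 : Matrix (Fin n) (Fin n) ℝ) - S := by
    rw [hPh, mul_sub, sub_mul]
    have h1 : P * diagonal (fun i => (δ i - ε) / β i) * P
        = diagonal (fun i => δ i - ε) := by
      rw [hP, diagonal_mul_diagonal, diagonal_mul_diagonal]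
      refine congrArg _ (funext fun i => ?_)
      calc s i * ((δ i - ε) / β i) * s i
          = (s i * s i) * ((δ i - ε) / β i) := by ring
        _ = β i * ((δ i - ε) / β i) := by rw [hss]
        _ = δ i - ε := by rw [mul_comm, div_mul_cancel₀ _ (hβ0 i)]
    have h2 : diagonal (fun i => δ i - ε)
        = diagonal δ - ε • (1 : Matrix (Fin n) (Fin n) ℝ) := by
      rw [smul_one_eq_diagonal, ← diagonal_sub]
    rw [h1, h2, hSdef, neg_smul]
    abel
  have hR : (Matrix.diagonal (fun i => (δ i - ε) / β i) - A).PosSemidef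
      ↔ ∀ i, hS.eigenvalues i ≤ -ε := by
    rw [← aux_psd_conj_iff (P := P) (Q := Q) hQP, hconj, aux_shift_psd_iff hS]
  rw [hL, hR]
end

section
/- Let A be an n×n real symmetric matrix, B = diag(β_1,…,β_n) with β_i > 0, D = diag(δ_1,…,δ_n) with δ_i ∈ ℝ, and ε > 0. Suppose every eigenvalue of the symmetric matrix S = B^{1/2} A B^{1/2} − D is at most −ε, where B^{1/2} = diag(√β_i). Then for every x ∈ ℝⁿ and every t ≥ 0, ‖exp(t(BA − D)) x‖ ≤ α e^{−εt} ‖x‖ with α = √( (max_i β_i) / (min_i β_i) ), where exp denotes the matrix exponential and ‖·‖ the Euclidean norm. -/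
/-!
Write `P = diag(√β)`. Then `BA - D = P S P⁻¹`, so `exp(t(BA - D)) = P exp(tS) P⁻¹` and, in the
`ℓ²` operator norm, `‖exp(t(BA - D))‖ ≤ ‖P‖ ‖exp(tS)‖ ‖P⁻¹‖`. By the spectral theorem
`S = U diag(μ) Uᵀ` with `U` orthogonal, so `‖exp(tS)‖ = maxᵢ e^{tμᵢ} ≤ e^{-εt}`, while
`‖P‖ ≤ √(max β)` and `‖P⁻¹‖ ≤ 1 / √(min β)`.
-/

open Matrix

section Diagonal

variable {ι K : Type*} [Fintype ι] [DecidableEq ι] [Field K]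

theorem Matrix.diagonal_mul_diagonal_inv {d : ι → K} (hd : ∀ i, d i ≠ 0) :
    diagonal d * diagonal d⁻¹ = 1 := by
  rw [diagonal_mul_diagonal, ← diagonal_one]
  exact congrArg diagonal (funext fun i => mul_inv_cancel₀ (hd i))

theorem Matrix.diagonal_mul_self_mul_sub_diagonal_eq_conj {d : ι → K} (hd : ∀ i, d i ≠ 0)
    (A : Matrix ι ι K) (δ : ι → K) :
    diagonal (d * d) * A - diagonal δ =
      diagonal d * (diagonal d * A * diagonal d - diagonal δ) * (diagonal d)⁻¹ := by
  have hinv := diagonal_mul_diagonal_inv hd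
  rw [inv_eq_right_inv hinv]
  calc diagonal (d * d) * A - diagonal δ
      = diagonal d * diagonal d * A * (diagonal d * diagonal d⁻¹)
        - diagonal δ * (diagonal d * diagonal d⁻¹) := by
        rw [hinv, mul_one, mul_one, diagonal_mul_diagonal]; rfl
    _ = diagonal d * diagonal d * A * (diagonal d * diagonal d⁻¹)
        - diagonal d * diagonal δ * diagonal d⁻¹ := by
        simp only [(commute_diagonal d δ).eq, mul_assoc]
    _ = _ := by noncomm_ring

end Diagonal

section L2OpNorm

open scoped Matrix.Norms.L2Operator

variable {ι : Type*} [Fintype ι] [DecidableEq ι]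

theorem Matrix.IsHermitian.l2_opNorm_exp_smul_le {S : Matrix ι ι ℝ} (hS : S.IsHermitian)
    {c t : ℝ} (hc : ∀ i, hS.eigenvalues i ≤ c) (ht : 0 ≤ t) :
    ‖NormedSpace.exp (t • S)‖ ≤ Real.exp (c * t) := by
  set U : Matrix ι ι ℝ := (hS.eigenvectorUnitary : Matrix ι ι ℝ)
  have hU : U ∈ unitary (Matrix ι ι ℝ) := hS.eigenvectorUnitary.2
  have hUinv : U⁻¹ = star U := inv_eq_left_inv (Unitary.star_mul_self_of_mem hU)
  have hdiag : t • S = U * diagonal (t • hS.eigenvalues) * U⁻¹ := by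
    conv_lhs => rw [hS.spectral_theorem]
    simp [hUinv, U, diagonal_smul]
  rw [hdiag, exp_conj _ _ Unitary.isUnit_coe, exp_diagonal, hUinv,
    CStarRing.norm_mul_mem_unitary _ (Unitary.star_mem hU), CStarRing.norm_mem_unitary_mul _ hU,
    l2_opNorm_diagonal]
  refine (pi_norm_le_iff_of_nonneg (Real.exp_nonneg _)).2 fun i => ?_
  rw [Pi.coe_exp, Pi.smul_apply, smul_eq_mul, ← Real.exp_eq_exp_ℝ, Real.norm_eq_abs,
    Real.abs_exp, Real.exp_le_exp, mul_comm c]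
  exact mul_le_mul_of_nonneg_left (hc i) ht

theorem norm_toEuclideanLin_exp_smul_diagonal_mul_self_mul_sub_le {d : ι → ℝ}
    (hd : ∀ i, d i ≠ 0) (A : Matrix ι ι ℝ) (δ : ι → ℝ)
    (hS : (diagonal d * A * diagonal d - diagonal δ).IsHermitian) {c t : ℝ}
    (hc : ∀ i, hS.eigenvalues i ≤ c) (ht : 0 ≤ t) (x : EuclideanSpace ℝ ι) :
    ‖toEuclideanLin (NormedSpace.exp (t • (diagonal (d * d) * A - diagonal δ))) x‖ ≤
      ‖d‖ * ‖d⁻¹‖ * Real.exp (c * t) * ‖x‖ := by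
  have hunit : IsUnit (diagonal d) := isUnit_diagonal.2 (Pi.isUnit_iff.2 fun i => (hd i).isUnit)
  rw [diagonal_mul_self_mul_sub_diagonal_eq_conj hd, ← smul_mul_assoc, ← mul_smul_comm,
    exp_conj _ _ hunit, inv_eq_right_inv (diagonal_mul_diagonal_inv hd)]
  calc _ ≤ _ := l2_opNorm_mulVec _ x
    _ ≤ _ := by
      grw [l2_opNorm_mul, l2_opNorm_mul, l2_opNorm_diagonal, l2_opNorm_diagonal,
        hS.l2_opNorm_exp_smul_le hc ht]
    _ = _ := by ring

end L2OpNorm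

theorem exp_BA_sub_D_decay_general
    {n : ℕ} [NeZero n] (A : Matrix (Fin n) (Fin n) ℝ)
    (β δ : Fin n → ℝ) (hβ : ∀ i, 0 < β i) (ε : ℝ)
    (hS : (Matrix.diagonal (fun i => Real.sqrt (β i)) * A *
            Matrix.diagonal (fun i => Real.sqrt (β i)) -
          Matrix.diagonal δ).IsHermitian)
    (hspec : ∀ i, hS.eigenvalues i ≤ -ε) :
    ∀ (x : EuclideanSpace ℝ (Fin n)) (t : ℝ), 0 ≤ t →
      ‖Matrix.toEuclideanLin
          (NormedSpace.exp (t • (Matrix.diagonal β * A - Matrix.diagonal δ))) x‖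
        ≤ Real.sqrt ((Finset.univ.sup' Finset.univ_nonempty β) /
            (Finset.univ.inf' Finset.univ_nonempty β)) *
          Real.exp (-ε * t) * ‖x‖ := by
  intro x t ht
  have hsqrt : ∀ i, 0 < √(β i) := fun i => Real.sqrt_pos.2 (hβ i)
  have hsq : (fun i => √(β i)) * (fun i => √(β i)) = β :=
    funext fun i => Real.mul_self_sqrt (hβ i).le
  have hβmin : 0 < Finset.univ.inf' Finset.univ_nonempty β :=
    (Finset.lt_inf'_iff _).2 fun i _ => hβ i
  have hnorm : ‖fun i => √(β i)‖ ≤ √(Finset.univ.sup' Finset.univ_nonempty β) :=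
    (pi_norm_le_iff_of_nonneg (Real.sqrt_nonneg _)).2 fun i => by
      rw [Real.norm_of_nonneg (hsqrt i).le]
      exact Real.sqrt_le_sqrt (Finset.le_sup' β (Finset.mem_univ i))
  have hnorm_inv : ‖(fun i => √(β i))⁻¹‖ ≤ (√(Finset.univ.inf' Finset.univ_nonempty β))⁻¹ :=
    (pi_norm_le_iff_of_nonneg (by positivity)).2 fun i => by
      rw [Pi.inv_apply, norm_inv, Real.norm_of_nonneg (hsqrt i).le]
      exact inv_anti₀ (by positivity)
        (Real.sqrt_le_sqrt (Finset.inf'_le β (Finset.mem_univ i)))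
  have hdecay := norm_toEuclideanLin_exp_smul_diagonal_mul_self_mul_sub_le
    (fun i => (hsqrt i).ne') A δ hS hspec ht x
  rw [hsq] at hdecay
  calc _ ≤ _ := hdecay
    _ ≤ _ := by grw [hnorm, hnorm_inv]
    _ = _ := by rw [Real.sqrt_div' _ hβmin.le, div_eq_mul_inv]

/-- **Exponential decay for `BA - D` via its symmetrization.**
For `A` real symmetric, `B = diag(β)` with positive entries, `D = diag(δ)`, and
`ε > 0`: if every eigenvalue of the symmetric matrix `S = B^{1/2} A B^{1/2} - D`
is at most `-ε`, then `‖exp(t(BA - D)) x‖ ≤ α e^{-εt} ‖x‖` for all `x` and `t ≥ 0`,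
with `α = √((maxᵢ βᵢ)/(minᵢ βᵢ))` and `‖·‖` the Euclidean norm. -/
theorem exp_BA_sub_D_decay
    {n : ℕ} [NeZero n] (A : Matrix (Fin n) (Fin n) ℝ) (hA : A.IsSymm)
    (β δ : Fin n → ℝ) (hβ : ∀ i, 0 < β i) (ε : ℝ) (hε : 0 < ε)
    (hS : (Matrix.diagonal (fun i => Real.sqrt (β i)) * A *
            Matrix.diagonal (fun i => Real.sqrt (β i)) -
          Matrix.diagonal δ).IsHermitian)
    (hspec : ∀ i, hS.eigenvalues i ≤ -ε) :
    ∀ (x : EuclideanSpace ℝ (Fin n)) (t : ℝ), 0 ≤ t →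
      ‖Matrix.toEuclideanLin
          (NormedSpace.exp (t • (Matrix.diagonal β * A - Matrix.diagonal δ))) x‖
        ≤ Real.sqrt ((Finset.univ.sup' Finset.univ_nonempty β) /
            (Finset.univ.inf' Finset.univ_nonempty β)) *
          Real.exp (-ε * t) * ‖x‖ :=
  exp_BA_sub_D_decay_general A β δ hβ ε hS hspec
end

section
/- Let A be an n×n real symmetric matrix, ε ∈ ℝ, and for each i let δ_i ∈ ℝ, c_i ∈ ℝ, and 0 < β̲_i < β̄_i. Suppose β ∈ ℝⁿ is primal feasible: β_i ∈ {β̲_i, β̄_i} for each i and (D − εI)B⁻¹ − A is positive semidefinite, where B = diag(β_i) and D = diag(δ_i). Suppose (Z, u) is dual feasible: Z is an n×n real symmetric positive semidefinite matrix and u ∈ ℝⁿ satisfies u_i ≥ c_i β̄_i + ((δ_i − ε)/β̄_i) Z_{ii} and u_i ≥ c_i β̲_i + ((δ_i − ε)/β̲_i) Z_{ii} for all i. Then ∑_{i=1}^n c_i β_i ≤ ∑_{i=1}^n u_i − trace(A Z). In particular, the optimal value T_C* of the combinatorial primal problem (maximize c^T β over such feasible β) is upper bounded by the optimal value D_C*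 of the dual semidefinite program (minimize 1^T u − trace(A Z) over such dual-feasible (Z, u)). -/
/-!
Pair the primal certificate `M = (D - εI)B⁻¹ - A ⪰ 0` with the dual matrix `Z ⪰ 0`:
`0 ≤ trace (M Z) = ∑ᵢ ((δᵢ - ε)/βᵢ) Zᵢᵢ - trace (A Z)`. Since `βᵢ` is one of the two admissible
values, the dual constraints give `cᵢβᵢ + ((δᵢ - ε)/βᵢ) Zᵢᵢ ≤ uᵢ`; summing over `i` and using the
trace inequality yields the bound.
-/

open Matrix Finset

namespace Matrix

open scoped MatrixOrder ComplexOrder in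
theorem PosSemidef.trace_mul_nonneg {ι 𝕜 : Type*} [Fintype ι] [RCLike 𝕜]
    {M N : Matrix ι ι 𝕜} (hM : M.PosSemidef) (hN : N.PosSemidef) : 0 ≤ (M * N).trace := by
  classical
  -- `trace (M N) = trace (√N M √N)`, and `√N M √N` is positive semidefinite.
  have hS : (CFC.sqrt N)ᴴ = CFC.sqrt N := (CFC.sqrt_nonneg N).isSelfAdjoint
  rw [← CFC.sqrt_mul_sqrt_self N hN.nonneg, ← Matrix.mul_assoc, trace_mul_cycle]
  simpa [hS] using (hM.conjTranspose_mul_mul_same (CFC.sqrt N)).trace_nonneg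

theorem trace_diagonal_mul {ι R : Type*} [Fintype ι] [DecidableEq ι] [NonUnitalNonAssocSemiring R]
    (d : ι → R) (Z : Matrix ι ι R) : (diagonal d * Z).trace = ∑ i, d i * Z i i := by
  simp [trace, diagonal_mul]

theorem PosSemidef.trace_mul_le_of_diagonal_sub {ι : Type*} [Fintype ι] [DecidableEq ι]
    {d : ι → ℝ} {A Z : Matrix ι ι ℝ} (hM : (diagonal d - A).PosSemidef) (hZ : Z.PosSemidef) :
    (A * Z).trace ≤ ∑ i, d i * Z i i := by
  have h := hM.trace_mul_nonneg hZ
  rw [Matrix.sub_mul, trace_sub, trace_diagonal_mul] at h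
  exact sub_nonneg.mp h

end Matrix

theorem combinatorial_weak_duality_general
    {n : ℕ} (A : Matrix (Fin n) (Fin n) ℝ)
    (ε : ℝ) (δ c βlo βhi : Fin n → ℝ)
    (β : Fin n → ℝ) (hfeas : ∀ i, β i = βlo i ∨ β i = βhi i)
    (hPSD : (Matrix.diagonal (fun i => (δ i - ε) / β i) - A).PosSemidef)
    (Z : Matrix (Fin n) (Fin n) ℝ) (hZ : Z.PosSemidef)
    (u : Fin n → ℝ)
    (hu1 : ∀ i, c i * βhi i + (δ i - ε) / βhi i * Z i i ≤ u i)
    (hu2 : ∀ i, c i * βlo i + (δ i - ε) / βlo i * Z i i ≤ u i) :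
    ∑ i, c i * β i ≤ ∑ i, u i - (A * Z).trace := by
  have hnode : ∀ i, c i * β i + (δ i - ε) / β i * Z i i ≤ u i := fun i => by
    rcases hfeas i with h | h <;> rw [h]
    exacts [hu2 i, hu1 i]
  calc ∑ i, c i * β i
      = ∑ i, (c i * β i + (δ i - ε) / β i * Z i i) - ∑ i, (δ i - ε) / β i * Z i i := by
        rw [sum_add_distrib, add_sub_cancel_right]
    _ ≤ ∑ i, u i - (A * Z).trace :=
        sub_le_sub (sum_le_sum fun i _ => hnode i) (hPSD.trace_mul_le_of_diagonal_sub hZ)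

/-- **Weak duality for the combinatorial vaccination problem.**
If `β` is primal feasible (`βᵢ ∈ {β̲ᵢ, β̄ᵢ}` and `(D - εI)B⁻¹ - A ⪰ 0`) and
`(Z, u)` is dual feasible (`Z ⪰ 0` and `uᵢ ≥ cᵢβ̄ᵢ + ((δᵢ - ε)/β̄ᵢ) Zᵢᵢ`,
`uᵢ ≥ cᵢβ̲ᵢ + ((δᵢ - ε)/β̲ᵢ) Zᵢᵢ` for all `i`), then
`∑ᵢ cᵢβᵢ ≤ ∑ᵢ uᵢ - trace(AZ)`; in particular the primal optimal value is upper
bounded by the dual optimal value. -/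
theorem combinatorial_weak_duality
    {n : ℕ} (A : Matrix (Fin n) (Fin n) ℝ) (hA : A.IsSymm)
    (ε : ℝ) (δ c βlo βhi : Fin n → ℝ)
    (hlo : ∀ i, 0 < βlo i) (hlohi : ∀ i, βlo i < βhi i)
    (β : Fin n → ℝ) (hfeas : ∀ i, β i = βlo i ∨ β i = βhi i)
    (hPSD : (Matrix.diagonal (fun i => (δ i - ε) / β i) - A).PosSemidef)
    (Z : Matrix (Fin n) (Fin n) ℝ) (hZ : Z.PosSemidef)
    (u : Fin n → ℝ)
    (hu1 : ∀ i, c i * βhi i + (δ i - ε) / βhi i * Z i i ≤ u i)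
    (hu2 : ∀ i, c i * βlo i + (δ i - ε) / βlo i * Z i i ≤ u i) :
    ∑ i, c i * β i ≤ ∑ i, u i - (A * Z).trace :=
  combinatorial_weak_duality_general A ε δ c βlo βhi β hfeas hPSD Z hZ u hu1 hu2
end
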